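/- Let G be a finitely generated group. Then the Morse boundary of G is either empty or has at least 2 points. -/

import Mathlib

open Set

/-- A Morse gauge. -/
abbrev MorseGauge := ℝ → ℝ → ℝ

/-- The constant `δ_M` associated to a Morse gauge `M`. -/
noncomputable def deltaM (M : MorseGauge) : ℝ :=
  max (4 * M 1 (2 * M 5 0) + 2 * M 5 0) (8 * M 3 0)

/-- A list of letters from `S ∪ S⁻¹`. -/
def IsWordOver {G : Type*} [Group G] (S : Set G) (l : List G) : Prop :=
  ∀ x ∈ l, x ∈ S ∨ x⁻¹ ∈ S

/-- The word metric on `G` associated to the generating set `S`. -/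
noncomputable def wordDist {G : Type*} [Group G] (S : Set G) (x y : G) : ℝ :=
  sInf {r : ℝ | ∃ l : List G, IsWordOver S l ∧ l.prod = x⁻¹ * y ∧ r = l.length}

section NatPaths

variable {G : Type*}

/-- A discrete `(L,e)`-quasi-geodesic (with respect to the distance function `d`),
parametrised over a set of naturals. -/
def IsQGOnN (d : G → G → ℝ) (L e : ℝ) (γ : ℕ → G) (s : Set ℕ) : Prop :=
  ∀ i ∈ s, ∀ j ∈ s,
    (1 / L) * |(i : ℝ) - (j : ℝ)| - e ≤ d (γ i) (γ j) ∧
      d (γ i) (γ j) ≤ L * |(i : ℝ) - (j : ℝ)| + e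

/-- A discrete geodesic with respect to `d`. -/
def IsGeodesicOnN (d : G → G → ℝ) (γ : ℕ → G) (s : Set ℕ) : Prop :=
  ∀ i ∈ s, ∀ j ∈ s, d (γ i) (γ j) = |(i : ℝ) - (j : ℝ)|

/-- The (discrete) path `γ` on `s` is `M`-Morse with respect to `d`. -/
def IsMorseOnN (d : G → G → ℝ) (M : MorseGauge) (γ : ℕ → G) (s : Set ℕ) : Prop :=
  ∀ L e, 1 ≤ L → 0 ≤ e → ∀ (η : ℕ → G) (a b : ℕ), a ≤ b →
    IsQGOnN d L e η (Icc a b) → η a ∈ γ '' s → η b ∈ γ '' s →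
    ∀ i ∈ Icc a b, ∃ j ∈ s, d (η i) (γ j) ≤ M L e

/-- A Morse geodesic ray from the basepoint `o`. -/
def IsMorseRayN (d : G → G → ℝ) (o : G) (γ : ℕ → G) : Prop :=
  γ 0 = o ∧ IsGeodesicOnN d γ univ ∧ ∃ M, IsMorseOnN d M γ univ

/-- The type of Morse geodesic rays from `o`. -/
def MRayN (d : G → G → ℝ) (o : G) := {γ : ℕ → G // IsMorseRayN d o γ}

/-- The Morse boundary: Morse rays from `o` up to bounded (Hausdorff) distance. -/
def MorseBoundaryN (d : G → G → ℝ) (o : G) :=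
  Quot (fun γ γ' : MRayN d o => ∃ C, ∀ i, d (γ.1 i) (γ'.1 i) ≤ C)

/-- `z` is an `M`-Morse direction: it admits an `M`-Morse realization. -/
def MorseDirN (d : G → G → ℝ) (o : G) (M : MorseGauge) (z : MorseBoundaryN d o) : Prop :=
  ∃ γ : MRayN d o, IsMorseOnN d M γ.1 univ ∧ Quot.mk _ γ = z

/-- The `M`-Morse stratum `∂^M` of the Morse boundary. -/
def stratumN (d : G → G → ℝ) (o : G) (M : MorseGauge) : Set (MorseBoundaryN d o) :=
  {z | MorseDirN d o M z}

/-- The neighbourhood `U_{M,n}(z)` in the `M`-Morse stratum: classes of `M`-Morse rays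
that `δ_M`-fellow-travel every `M`-Morse realization of `z` up to time `n`. -/
def UN (d : G → G → ℝ) (o : G) (M : MorseGauge) (n : ℕ) (z : MorseBoundaryN d o) :
    Set (MorseBoundaryN d o) :=
  {w | ∃ η : MRayN d o, Quot.mk _ η = w ∧ IsMorseOnN d M η.1 univ ∧
        ∀ ξ : MRayN d o, IsMorseOnN d M ξ.1 univ → Quot.mk _ ξ = z →
          ∀ t ≤ n, d (η.1 t) (ξ.1 t) < deltaM M}

/-- The direct-limit topology on the Morse boundary: a set is open iff its intersection
with every stratum is open for the neighbourhood-basis topology of that stratum. -/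
def morseTopologyN (d : G → G → ℝ) (o : G) : TopologicalSpace (MorseBoundaryN d o) where
  IsOpen O := ∀ M z, z ∈ O → MorseDirN d o M z → ∃ n, UN d o M n z ∩ stratumN d o M ⊆ O
  isOpen_univ := by intro M z _ _; exact ⟨0, fun w _ => trivial⟩
  isOpen_inter := by
    intro O₁ O₂ h₁ h₂ M z hz hM
    obtain ⟨n₁, hn₁⟩ := h₁ M z hz.1 hM
    obtain ⟨n₂, hn₂⟩ := h₂ M z hz.2 hM
    refine ⟨max n₁ n₂, fun w hw => ⟨hn₁ ⟨?_, hw.2⟩, hn₂ ⟨?_, hw.2⟩⟩⟩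
    · obtain ⟨η, h1, h2, h3⟩ := hw.1
      exact ⟨η, h1, h2, fun ξ a b t ht => h3 ξ a b t (ht.trans (le_max_left _ _))⟩
    · obtain ⟨η, h1, h2, h3⟩ := hw.1
      exact ⟨η, h1, h2, fun ξ a b t ht => h3 ξ a b t (ht.trans (le_max_right _ _))⟩
  isOpen_sUnion := by
    intro S hS M z hz hM
    obtain ⟨O, hO, hzO⟩ := hz
    obtain ⟨n, hn⟩ := hS O hO M z hzO hM
    exact ⟨n, fun w hw => ⟨O, hO, hn hw⟩⟩

/-- `x ∈ G` is an `M`-Morse point: some geodesic from `o` to `x` is `M`-Morse. -/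
def MorsePtN (d : G → G → ℝ) (o : G) (M : MorseGauge) (x : G) : Prop :=
  ∃ (n : ℕ) (γ : ℕ → G), γ 0 = o ∧ γ n = x ∧
    IsGeodesicOnN d γ (Iic n) ∧ IsMorseOnN d M γ (Iic n)

/-- Membership of the point `x` in the filled neighbourhood `Û_{M,k}(z)`. -/
def InFilledPtN (d : G → G → ℝ) (o : G) (M : MorseGauge) (k : ℕ)
    (z : MorseBoundaryN d o) (x : G) : Prop :=
  ∃ (n : ℕ) (γ : ℕ → G), k ≤ n ∧ γ 0 = o ∧ γ n = x ∧
    IsGeodesicOnN d γ (Iic n) ∧ IsMorseOnN d M γ (Iic n) ∧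
    ∀ ξ : MRayN d o, IsMorseOnN d M ξ.1 univ → Quot.mk _ ξ = z →
      ∀ t ≤ k, d (γ t) (ξ.1 t) < deltaM M

end NatPaths

/-!
A Morse geodesic ray `γ` from `1` gives, since balls in the Cayley graph are finite (via an
ultrafilter limit of the translates `(γ n)⁻¹ γ`), a bi-infinite geodesic `β` through `1` whose
image is Morse with the same gauge. Each half of a Morse line is again Morse, with a worse gauge:
a quasi-geodesic with endpoints on the half can only leave it for a bounded time. So
`t ↦ β t` and `t ↦ β (-t)` are Morse geodesic rays from `1`, and since `d (β t) (β (-t)) = 2 t`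
they are not at bounded distance, hence give two distinct points of the Morse boundary.
-/

open Filter

lemma exists_crossing {P : ℕ → Prop} {a b : ℕ} (hab : a ≤ b) (ha : P a) (hb : ¬P b) :
    ∃ j, a ≤ j ∧ j < b ∧ P j ∧ ¬P (j + 1) := by
  induction b, hab using Nat.le_induction with
  | base => exact absurd ha hb
  | succ b hab ih =>
    by_cases hPb : P b
    · exact ⟨b, hab, lt_add_one b, hPb, hb⟩
    · obtain ⟨j, h₁, h₂, h₃, h₄⟩ := ih hPb
      exact ⟨j, h₁, by omega, h₃, h₄⟩

section WordMetric

variable {G : Type*} [Group G] {S : Set G}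

lemma IsWordOver.append {l₁ l₂ : List G} (h₁ : IsWordOver S l₁) (h₂ : IsWordOver S l₂) :
    IsWordOver S (l₁ ++ l₂) := by
  intro x hx
  rcases List.mem_append.1 hx with hx | hx
  exacts [h₁ x hx, h₂ x hx]

lemma IsWordOver.reverse_map_inv {l : List G} (h : IsWordOver S l) :
    IsWordOver S (l.map (·⁻¹)).reverse := by
  intro x hx
  obtain ⟨y, hy, rfl⟩ := List.mem_map.1 (List.mem_reverse.1 hx)
  rw [inv_inv]
  exact (h y hy).symm

lemma exists_isWordOver_prod_eq (hgen : Subgroup.closure S = ⊤) (g : G) :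
    ∃ l, IsWordOver S l ∧ l.prod = g := by
  have hg : g ∈ (Subgroup.closure S).toSubmonoid := by simp [hgen]
  rw [Subgroup.closure_toSubmonoid] at hg
  obtain ⟨l, hl, rfl⟩ := Submonoid.exists_list_of_mem_closure hg
  exact ⟨l, fun x hx => by simpa using hl x hx, rfl⟩

lemma wordDist_le_length {x y : G} {l : List G} (hl : IsWordOver S l)
    (hprod : l.prod = x⁻¹ * y) : wordDist S x y ≤ l.length :=
  csInf_le ⟨0, by rintro _ ⟨l', -, -, rfl⟩; positivity⟩ ⟨l, hl, hprod, rfl⟩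

lemma exists_length_eq_wordDist (hgen : Subgroup.closure S = ⊤) (x y : G) :
    ∃ l, IsWordOver S l ∧ l.prod = x⁻¹ * y ∧ wordDist S x y = l.length := by
  classical
  have hlen : ∃ n, ∃ l : List G, IsWordOver S l ∧ l.prod = x⁻¹ * y ∧ l.length = n :=
    let ⟨l, hl, hprod⟩ := exists_isWordOver_prod_eq hgen (x⁻¹ * y)
    ⟨_, l, hl, hprod, rfl⟩
  obtain ⟨l, hl, hprod, hmin⟩ := Nat.find_spec hlen
  refine ⟨l, hl, hprod, le_antisymm (wordDist_le_length hl hprod) ?_⟩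
  refine le_csInf ⟨_, l, hl, hprod, rfl⟩ ?_
  rintro _ ⟨l', hl', hprod', rfl⟩
  rw [hmin]
  exact_mod_cast Nat.find_min' hlen ⟨l', hl', hprod', rfl⟩

lemma finite_setOf_wordDist_le (hfin : S.Finite) (hgen : Subgroup.closure S = ⊤) (R : ℝ) :
    {x : G | wordDist S 1 x ≤ R}.Finite := by
  let T := S ∪ S⁻¹
  have : Finite T := (hfin.union hfin.inv).to_subtype
  refine (((List.finite_length_le T ⌊R⌋₊).image (List.map Subtype.val)).image List.prod).subset ?_
  intro x hx
  obtain ⟨l, hl, hprod, hlen⟩ := exists_length_eq_wordDist hgen 1 x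
  lift l to List T using fun y hy => hl y hy
  refine ⟨l.map Subtype.val, ⟨l, ?_, rfl⟩, by simpa using hprod⟩
  have : (l.length : ℝ) ≤ R := by simpa [hlen] using hx
  exact Nat.le_floor (by simpa using this)

end WordMetric

section PseudoMetric

variable {G : Type*} [Group G]

structure IsLeftInvPseudoMetric (d : G → G → ℝ) : Prop where
  dist_self : ∀ x, d x x = 0
  dist_comm : ∀ x y, d x y = d y x
  dist_triangle : ∀ x y z, d x z ≤ d x y + d y z
  dist_mul_left : ∀ g x y, d (g * x) (g * y) = d x y

lemma IsLeftInvPseudoMetric.nonneg {d : G → G → ℝ} (hd : IsLeftInvPseudoMetric d) (x y : G) :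
    0 ≤ d x y := by
  linarith [hd.dist_triangle x y x, hd.dist_self x, hd.dist_comm x y]

lemma isLeftInvPseudoMetric_wordDist {S : Set G} (hgen : Subgroup.closure S = ⊤) :
    IsLeftInvPseudoMetric (wordDist S) := by
  have hle_comm : ∀ x y : G, wordDist S y x ≤ wordDist S x y := fun x y => by
    obtain ⟨l, hl, hprod, hlen⟩ := exists_length_eq_wordDist hgen x y
    refine (wordDist_le_length hl.reverse_map_inv ?_).trans (by simp [hlen])
    rw [← List.prod_inv_reverse, hprod, mul_inv_rev, inv_inv]
  refine ⟨fun x => ?_, fun x y => (hle_comm y x).antisymm (hle_comm x y), fun x y z => ?_,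
    fun g x y => ?_⟩
  · refine le_antisymm ?_ (Real.sInf_nonneg ?_)
    · simpa using wordDist_le_length (S := S) (x := x) (y := x) (l := []) (by simp [IsWordOver])
    · rintro _ ⟨l, -, -, rfl⟩
      positivity
  · obtain ⟨l₁, hl₁, hprod₁, hlen₁⟩ := exists_length_eq_wordDist hgen x y
    obtain ⟨l₂, hl₂, hprod₂, hlen₂⟩ := exists_length_eq_wordDist hgen y z
    refine (wordDist_le_length (hl₁.append hl₂) ?_).trans (by simp [hlen₁, hlen₂])
    rw [List.prod_append, hprod₁, hprod₂]
    group
  · simp [wordDist, mul_assoc]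

end PseudoMetric

section Paths

variable {G : Type*} {d : G → G → ℝ} {β : ℤ → G}

def IsMorseSet (d : G → G → ℝ) (M : MorseGauge) (A : Set G) : Prop :=
  ∀ L e, 1 ≤ L → 0 ≤ e → ∀ (q : ℕ → G) (a b : ℕ), a ≤ b → IsQGOnN d L e q (Icc a b) →
    q a ∈ A → q b ∈ A → ∀ i ∈ Icc a b, ∃ x ∈ A, d (q i) x ≤ M L e

lemma isMorseOnN_iff_isMorseSet_image {M : MorseGauge} {γ : ℕ → G} {s : Set ℕ} :
    IsMorseOnN d M γ s ↔ IsMorseSet d M (γ '' s) := by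
  simp only [IsMorseOnN, IsMorseSet, exists_mem_image]

lemma IsQGOnN.dist_le {L e : ℝ} {q : ℕ → G} {s : Set ℕ} (hq : IsQGOnN d L e q s) {i j : ℕ}
    (hi : i ∈ s) (hj : j ∈ s) (hij : i ≤ j) : d (q i) (q j) ≤ L * (j - i) + e := by
  have := (hq i hi j hj).2
  rwa [abs_sub_comm, abs_of_nonneg (by simpa using hij)] at this

lemma IsQGOnN.sub_le {L e : ℝ} (hL : 0 < L) {q : ℕ → G} {s : Set ℕ} (hq : IsQGOnN d L e q s)
    {i j : ℕ} (hi : i ∈ s) (hj : j ∈ s) (hij : i ≤ j) : (j : ℝ) - i ≤ L * (d (q i) (q j) + e) := by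
  have := (hq i hi j hj).1
  rw [abs_sub_comm, abs_of_nonneg (by simpa using hij)] at this
  rw [← div_le_iff₀' hL]
  linarith [one_div_mul_eq_div L ((j : ℝ) - i)]

lemma IsQGOnN.dist_le_of_le_of_le {L e : ℝ} (hL : 0 < L) {q : ℕ → G} {s : Set ℕ}
    (hq : IsQGOnN d L e q s) {i₁ i i₂ : ℕ} (hi₁ : i₁ ∈ s) (hi : i ∈ s) (hi₂ : i₂ ∈ s)
    (h₁ : i₁ ≤ i) (h₂ : i ≤ i₂) : d (q i₁) (q i) ≤ L * (L * (d (q i₁) (q i₂) + e)) + e := by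
  have hlen := hq.sub_le hL hi₁ hi₂ (h₁.trans h₂)
  have hii : (i : ℝ) - i₁ ≤ i₂ - i₁ := by gcongr
  calc d (q i₁) (q i) ≤ L * (i - i₁) + e := hq.dist_le hi₁ hi h₁
    _ ≤ L * (L * (d (q i₁) (q i₂) + e)) + e := by gcongr; exact hii.trans hlen

def IsGeodesicLine (d : G → G → ℝ) (β : ℤ → G) : Prop :=
  ∀ i j : ℤ, d (β i) (β j) = |(i : ℝ) - j|

lemma IsGeodesicLine.comp_neg (hβ : IsGeodesicLine d β) : IsGeodesicLine d (β ∘ Neg.neg) := by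
  intro i j
  rw [Function.comp_apply, Function.comp_apply, hβ, abs_sub_comm]
  congr 1
  push_cast
  ring

lemma IsGeodesicLine.dist_max_le (hβ : IsGeodesicLine d β) {r : ℝ} (hr : 0 ≤ r) {j m : ℤ}
    (h : (m : ℝ) - r ≤ j) : d (β j) (β (max j m)) ≤ r := by
  rw [hβ, abs_le]
  rcases le_total m j with hmj | hjm
  · simp [max_eq_left hmj, hr]
  · rw [max_eq_right hjm]
    constructor <;> linarith [(Int.cast_le (R := ℝ)).2 hjm]

def restrictGauge (M : MorseGauge) : MorseGauge :=
  fun L e => L ^ 2 * (4 * M L e + L + 2 * e) + e + 2 * M L e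

end Paths

section MorseSetsInGroups

variable {G : Type*} [Group G] {d : G → G → ℝ} {M : MorseGauge}

lemma IsMorseSet.image_mul_left (hd : IsLeftInvPseudoMetric d) {A : Set G}
    (hA : IsMorseSet d M A) (g : G) : IsMorseSet d M ((g * ·) '' A) := by
  intro L e hL he q a b hab hq ha hb i hi
  have hq' : IsQGOnN d L e (fun j => g⁻¹ * q j) (Icc a b) := fun j hj k hk => by
    simpa only [hd.dist_mul_left] using hq j hj k hk
  have hmem : ∀ {y}, y ∈ (g * ·) '' A → g⁻¹ * y ∈ A := by
    rintro _ ⟨x, hx, rfl⟩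
    simpa using hx
  obtain ⟨x, hx, hdist⟩ := hA L e hL he _ a b hab hq' (hmem ha) (hmem hb) i hi
  refine ⟨g * x, mem_image_of_mem _ hx, ?_⟩
  rwa [← hd.dist_mul_left g⁻¹, inv_mul_cancel_left]

lemma IsMorseSet.of_local (hd : IsLeftInvPseudoMetric d) {B : Set G}
    (h : ∀ x ∈ B, ∀ y ∈ B, ∀ R : ℝ,
      ∃ A, IsMorseSet d M A ∧ x ∈ A ∧ y ∈ A ∧ ∀ z ∈ A, d x z ≤ R → z ∈ B) :
    IsMorseSet d M B := by
  intro L e hL he q a b hab hq ha hb i hi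
  obtain ⟨A, hA, haA, hbA, hAB⟩ := h _ ha _ hb (d (q a) (q i) + M L e)
  obtain ⟨z, hz, hdist⟩ := hA L e hL he q a b hab hq haA hbA i hi
  exact ⟨z, hAB z hz (by linarith [hd.dist_triangle (q a) (q i) z]), hdist⟩

end MorseSetsInGroups

section GeodesicLines

variable {G : Type*} [Group G] {d : G → G → ℝ} {β : ℤ → G}

lemma IsGeodesicLine.abs_sub_le (hd : IsLeftInvPseudoMetric d) (hβ : IsGeodesicLine d β)
    (x y : G) (i j : ℤ) : |(i : ℝ) - j| ≤ d x (β i) + d x y + d y (β j) := by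
  rw [← hβ, hd.dist_comm x]
  linarith [hd.dist_triangle (β i) x (β j), hd.dist_triangle x y (β j)]

/-- Shadows `J` of consecutive points of `q` differ by at most `2 r + L + e`, so an excursion of
the shadows below `T` starts and ends at points of `q` at distance `≤ 4 r + L + e`, and the
quasi-geodesic inequalities bound its duration. -/
lemma IsGeodesicLine.exists_shadow_ge (hd : IsLeftInvPseudoMetric d) (hβ : IsGeodesicLine d β)
    {L e r T : ℝ} (hL : 0 < L) (he : 0 ≤ e) {q : ℕ → G} {a b : ℕ}
    (hq : IsQGOnN d L e q (Icc a b)) {J : ℕ → ℤ} (hJ : ∀ k ∈ Icc a b, d (q k) (β (J k)) ≤ r)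
    (ha : T ≤ J a) (hb : T ≤ J b) {i : ℕ} (hi : i ∈ Icc a b) :
    ∃ i₁ ∈ Icc a b, T ≤ J i₁ ∧ d (q i₁) (q i) ≤ L * (L * (4 * r + L + 2 * e)) + e := by
  have hr : 0 ≤ r := (hd.nonneg _ _).trans (hJ a ⟨le_rfl, hi.1.trans hi.2⟩)
  by_cases hTi : T ≤ J i
  · exact ⟨i, hi, hTi, by rw [hd.dist_self]; positivity⟩
  have hstep : ∀ k, a ≤ k → k < b → |(J k : ℝ) - J (k + 1)| ≤ 2 * r + L + e := by
    intro k hak hkb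
    have hk : k ∈ Icc a b := ⟨hak, hkb.le⟩
    have hk' : k + 1 ∈ Icc a b := ⟨by omega, hkb⟩
    have hqq := hq.dist_le hk hk' (by omega)
    push_cast at hqq
    linarith [hβ.abs_sub_le hd (q k) (q (k + 1)) (J k) (J (k + 1)), hJ k hk, hJ (k + 1) hk']
  obtain ⟨i₁, ha₁, hi₁, hP₁, hnP₁⟩ := exists_crossing (P := fun k => T ≤ J k) hi.1 ha hTi
  obtain ⟨i₂, hii₂, hi₂b, hnP₂, hP₂⟩ :=
    exists_crossing (P := fun k => ¬T ≤ J k) hi.2 hTi (not_not.2 hb)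
  simp only [not_le, not_lt] at hnP₁ hnP₂ hP₂
  have hm₁ : i₁ ∈ Icc a b := ⟨ha₁, by omega⟩
  have hm₂ : i₂ + 1 ∈ Icc a b := ⟨by omega, hi₂b⟩
  have hJ₁ := abs_le.1 (hstep i₁ ha₁ (by omega))
  have hJ₂ := abs_le.1 (hstep i₂ (by omega) hi₂b)
  have hJJ : d (β (J i₁)) (β (J (i₂ + 1))) ≤ 2 * r + L + e := by
    rw [hβ, abs_le]
    constructor <;> linarith
  have h₁₂ : d (q i₁) (q (i₂ + 1)) ≤ 4 * r + L + e := by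
    linarith [hd.dist_triangle (q i₁) (β (J i₁)) (q (i₂ + 1)),
      hd.dist_triangle (β (J i₁)) (β (J (i₂ + 1))) (q (i₂ + 1)),
      hd.dist_comm (β (J (i₂ + 1))) (q (i₂ + 1)), hJ i₁ hm₁, hJ (i₂ + 1) hm₂]
  refine ⟨i₁, hm₁, hP₁, (hq.dist_le_of_le_of_le hL hm₁ hi hm₂ hi₁.le (by omega)).trans ?_⟩
  have : d (q i₁) (q (i₂ + 1)) + e ≤ 4 * r + L + 2 * e := by linarith
  gcongr

lemma IsGeodesicLine.isMorseSet_image_Ici (hd : IsLeftInvPseudoMetric d)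
    (hβ : IsGeodesicLine d β) {M : MorseGauge} (hM : IsMorseSet d M (range β)) (m : ℤ) :
    IsMorseSet d (restrictGauge M) (β '' Ici m) := by
  intro L e hL he q a b hab hq ha hb i hi
  have hshadow : ∀ k ∈ Icc a b, ∃ J : ℤ, d (q k) (β J) ≤ M L e := fun k hk => by
    obtain ⟨_, ⟨J, rfl⟩, hJ⟩ :=
      hM L e hL he q a b hab hq (image_subset_range _ _ ha) (image_subset_range _ _ hb) k hk
    exact ⟨J, hJ⟩
  choose! J hJ using hshadow
  have hMs : 0 ≤ M L e := (hd.nonneg _ _).trans (hJ a ⟨le_rfl, hab⟩)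
  have hend : ∀ k ∈ Icc a b, q k ∈ β '' Ici m → m - M L e ≤ J k := by
    rintro k hk ⟨s, hs, hqs⟩
    have := hJ k hk
    rw [← hqs, hβ] at this
    linarith [(abs_le.1 this).2, (Int.cast_le (R := ℝ)).2 (mem_Ici.1 hs)]
  obtain ⟨i₁, hm₁, hT₁, hd₁⟩ := hβ.exists_shadow_ge hd (by linarith) he hq hJ
    (hend a ⟨le_rfl, hab⟩ ha) (hend b ⟨hab, le_rfl⟩ hb) hi
  refine ⟨_, mem_image_of_mem _ (mem_Ici.2 (le_max_right (J i₁) m)), ?_⟩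
  calc d (q i) (β (max (J i₁) m))
      ≤ d (q i₁) (q i) + (d (q i₁) (β (J i₁)) + d (β (J i₁)) (β (max (J i₁) m))) := by
        rw [hd.dist_comm (q i₁)]
        linarith [hd.dist_triangle (q i) (q i₁) (β (max (J i₁) m)),
          hd.dist_triangle (q i₁) (β (J i₁)) (β (max (J i₁) m))]
    _ ≤ L * (L * (4 * M L e + L + 2 * e)) + e + (M L e + M L e) := by
        gcongr
        exacts [hJ i₁ hm₁, hβ.dist_max_le hMs hT₁]
    _ = restrictGauge M L e := by simp only [restrictGauge]; ring

end GeodesicLines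

lemma Ultrafilter.exists_forall_eventually_eq_of_finite {ι α γ : Type*} (U : Ultrafilter γ)
    (f : γ → ι → α) (hf : ∀ i, ∃ s : Set α, s.Finite ∧ ∀ᶠ n in U, f n i ∈ s) :
    ∃ g : ι → α, ∀ i, ∀ᶠ n in U, f n i = g i := by
  choose s hs hfs using hf
  have : ∀ i, ∃ x, ∀ᶠ n in U, f n i = x := fun i => by
    obtain ⟨x, -, hx⟩ := (U.eventually_exists_mem_iff (P := fun x n => f n i = x) (hs i)).1
      ((hfs i).mono fun n hn => ⟨_, hn, rfl⟩)
    exact ⟨x, hx⟩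
  exact ⟨fun i => (this i).choose, fun i => (this i).choose_spec⟩

section Limit

variable {G : Type*} [Group G] {d : G → G → ℝ}

/-- Junk for `i < -n`, where `(n + i).toNat = 0`. -/
def shiftRay (γ : ℕ → G) (n : ℕ) (i : ℤ) : G := (γ n)⁻¹ * γ (n + i).toNat

lemma shiftRay_zero (γ : ℕ → G) (n : ℕ) : shiftRay γ n 0 = 1 := by simp [shiftRay]

lemma shiftRay_sub (γ : ℕ → G) (n m : ℕ) : shiftRay γ n (m - n) = (γ n)⁻¹ * γ m := by
  simp [shiftRay]

lemma dist_shiftRay (hd : IsLeftInvPseudoMetric d) {γ : ℕ → G} (hγ : IsGeodesicOnN d γ univ)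
    {n : ℕ} {i j : ℤ} (hi : -n ≤ i) (hj : -n ≤ j) :
    d (shiftRay γ n i) (shiftRay γ n j) = |(i : ℝ) - j| := by
  have hcast : ∀ k : ℤ, 0 ≤ k → ((k.toNat : ℕ) : ℝ) = k := fun k hk => by
    exact_mod_cast Int.toNat_of_nonneg hk
  rw [shiftRay, shiftRay, hd.dist_mul_left, hγ _ trivial _ trivial, hcast _ (by omega),
    hcast _ (by omega)]
  congr 1
  push_cast
  ring

def IsLimitOfShifts (γ : ℕ → G) (β : ℤ → G) : Prop :=
  ∀ k : ℕ, ∃ n, k ≤ n ∧ ∀ i ∈ Icc (-k : ℤ) k, shiftRay γ n i = β i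

lemma exists_isLimitOfShifts (hd : IsLeftInvPseudoMetric d)
    (hball : ∀ R : ℝ, {x : G | d 1 x ≤ R}.Finite) {γ : ℕ → G} (hγ : IsGeodesicOnN d γ univ) :
    ∃ β, IsLimitOfShifts γ β := by
  let U := hyperfilter ℕ
  have hlarge : ∀ k : ℕ, ∀ᶠ n in U, k ≤ n := fun k =>
    (hyperfilter_le_cofinite.trans_eq Nat.cofinite_eq_atTop) (eventually_ge_atTop k)
  obtain ⟨β, hβ⟩ := U.exists_forall_eventually_eq_of_finite (shiftRay γ) fun i =>
    ⟨_, hball |(i : ℝ)|, (hlarge i.natAbs).mono fun n hn => by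
      show d 1 _ ≤ _
      rw [← shiftRay_zero γ n, dist_shiftRay hd hγ (by omega) (by omega)]
      simp⟩
  exact ⟨β, fun k => ((hlarge k).and
    ((eventually_all_finite (finite_Icc _ _)).2 fun i _ => hβ i)).exists⟩

namespace IsLimitOfShifts

variable {γ : ℕ → G} {β : ℤ → G}

lemma apply_zero (h : IsLimitOfShifts γ β) : β 0 = 1 := by
  obtain ⟨n, -, hagree⟩ := h 0
  rw [← hagree 0 (by simp), shiftRay_zero]

lemma isGeodesicLine (hd : IsLeftInvPseudoMetric d) (hγ : IsGeodesicOnN d γ univ)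
    (h : IsLimitOfShifts γ β) : IsGeodesicLine d β := fun i j => by
  obtain ⟨n, hn, hagree⟩ := h (i.natAbs + j.natAbs)
  rw [← hagree i ⟨by omega, by omega⟩, ← hagree j ⟨by omega, by omega⟩,
    dist_shiftRay hd hγ (by omega) (by omega)]

/-- Near `β j₁`, the line `β` agrees with a translate of the `M`-Morse set `range γ`. -/
lemma isMorseSet_range (hd : IsLeftInvPseudoMetric d) (hγ : IsGeodesicOnN d γ univ)
    {M : MorseGauge} (hM : IsMorseSet d M (range γ)) (h : IsLimitOfShifts γ β) :
    IsMorseSet d M (range β) := by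
  refine IsMorseSet.of_local hd ?_
  rintro _ ⟨j₁, rfl⟩ _ ⟨j₂, rfl⟩ R
  obtain ⟨n, hn, hagree⟩ := h (j₁.natAbs + j₂.natAbs + ⌈R⌉₊)
  have hmem : ∀ i : ℤ, -n ≤ i → shiftRay γ n i ∈ (fun x => (γ n)⁻¹ * x) '' range γ :=
    fun i _ => ⟨_, mem_range_self _, rfl⟩
  refine ⟨_, hM.image_mul_left hd (γ n)⁻¹, ?_, ?_, ?_⟩
  · rw [← hagree j₁ ⟨by omega, by omega⟩]
    exact hmem j₁ (by omega)
  · rw [← hagree j₂ ⟨by omega, by omega⟩]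
    exact hmem j₂ (by omega)
  rintro _ ⟨_, ⟨m, rfl⟩, rfl⟩ hR
  have hm : |((m - n : ℤ) : ℝ)| ≤ |(j₁ : ℝ)| + R := by
    have h1 : d 1 (β j₁) = |(j₁ : ℝ)| := by
      simpa [h.apply_zero] using h.isGeodesicLine hd hγ 0 j₁
    have h2 : d 1 ((γ n)⁻¹ * γ m) = |((m - n : ℤ) : ℝ)| := by
      rw [← hd.dist_mul_left (γ n), mul_one, mul_inv_cancel_left, hγ _ trivial _ trivial,
        abs_sub_comm]
      push_cast
      rfl
    linarith [hd.dist_triangle 1 (β j₁) ((γ n)⁻¹ * γ m)]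
  have hk : |(m - n : ℤ)| ≤ |j₁| + ⌈R⌉₊ := by
    have : (|(m - n : ℤ)| : ℝ) ≤ |j₁| + ⌈R⌉₊ := by push_cast at hm ⊢; linarith [Nat.le_ceil R]
    exact_mod_cast this
  rw [Int.abs_eq_natAbs, Int.abs_eq_natAbs] at hk
  exact ⟨m - n, by rw [← hagree _ ⟨by omega, by omega⟩, shiftRay_sub]⟩

end IsLimitOfShifts

end Limit

section Boundary

variable {G : Type*} [Group G] {d : G → G → ℝ}

lemma IsGeodesicLine.isMorseRayN_natCast (hd : IsLeftInvPseudoMetric d) {β : ℤ → G}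
    (hβ0 : β 0 = 1) (hβ : IsGeodesicLine d β) {M : MorseGauge} (hM : IsMorseSet d M (range β)) :
    IsMorseRayN d 1 (fun i : ℕ => β i) := by
  refine ⟨by simpa using hβ0, fun i _ j _ => by simpa using hβ i j, restrictGauge M, ?_⟩
  rw [isMorseOnN_iff_isMorseSet_image, image_univ, range_comp' β Nat.cast, Nat.range_cast_int]
  exact hβ.isMorseSet_image_Ici hd hM 0

lemma equivalence_boundedDist (hd : IsLeftInvPseudoMetric d) (o : G) :
    Equivalence (fun γ γ' : MRayN d o => ∃ C, ∀ i, d (γ.1 i) (γ'.1 i) ≤ C) where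
  refl _ := ⟨0, fun _ => (hd.dist_self _).le⟩
  symm := fun ⟨C, hC⟩ => ⟨C, fun i => hd.dist_comm _ _ ▸ hC i⟩
  trans := fun ⟨C₁, hC₁⟩ ⟨C₂, hC₂⟩ =>
    ⟨C₁ + C₂, fun i => (hd.dist_triangle _ _ _).trans (add_le_add (hC₁ i) (hC₂ i))⟩

lemma MorseBoundaryN.mk_eq_mk_iff (hd : IsLeftInvPseudoMetric d) {o : G} {γ γ' : MRayN d o} :
    (Quot.mk _ γ : MorseBoundaryN d o) = Quot.mk _ γ' ↔ ∃ C, ∀ i, d (γ.1 i) (γ'.1 i) ≤ C :=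
  Quot.eq.trans (equivalence_boundedDist hd o).eqvGen_iff

end Boundary

/-- the Morse boundary of a finitely generated group is either empty or
has at least two points. -/
theorem stmt10 (G : Type*) [Group G] (S : Set G) (hfin : S.Finite)
    (hgen : Subgroup.closure S = ⊤) :
    IsEmpty (MorseBoundaryN (wordDist S) (1 : G)) ∨
      ∃ z w : MorseBoundaryN (wordDist S) (1 : G), z ≠ w := by
  have hd := isLeftInvPseudoMetric_wordDist hgen
  refine or_iff_not_imp_left.2 fun hne => ?_
  obtain ⟨z⟩ := not_isEmpty_iff.1 hne
  obtain ⟨⟨γ, -, hγ, M, hM⟩, -⟩ := Quot.exists_rep z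
  rw [isMorseOnN_iff_isMorseSet_image, image_univ] at hM
  obtain ⟨β, hlim⟩ := exists_isLimitOfShifts hd (finite_setOf_wordDist_le hfin hgen) hγ
  have hβ0 := hlim.apply_zero
  have hβ := hlim.isGeodesicLine hd hγ
  have hβM := hlim.isMorseSet_range hd hγ hM
  have hβ' := hβ.comp_neg
  refine ⟨Quot.mk _ ⟨_, hβ.isMorseRayN_natCast hd hβ0 hβM⟩,
    Quot.mk _ ⟨_, hβ'.isMorseRayN_natCast hd (by simpa using hβ0)
      (by rwa [neg_surjective.range_comp])⟩, ?_⟩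
  intro h
  obtain ⟨C, hC⟩ := (MorseBoundaryN.mk_eq_mk_iff hd).1 h
  obtain ⟨t, ht⟩ := exists_nat_gt C
  have h2t : wordDist S (β t) (β (-t)) = 2 * t := by
    rw [hβ, Int.cast_neg, sub_neg_eq_add, ← two_mul, abs_of_nonneg (by positivity)]
    rfl
  have hCt := hC t
  dsimp only [Function.comp_apply] at hCt
  linarith
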